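/- arXiv:2403.00971 — 5 statements merged into one kernel-verified Lean document; each statement's English description precedes it below -/
import Mathlib

section
/- For every b ∈ ℝ, every V_R < V_F and every N ≥ 0, the double integral I(N) admits the one-dimensional representation I(N) = ∫_0^∞ s^{-1} e^{-s²/2} e^{-sbN} (e^{s V_F} − e^{s V_R}) ds. -/
open MeasureTheory Real Filter

/-- The function `I(N)` from the NNLIF model: a double integral depending on the
connectivity parameter `b`, the reset potential `V_R` and the firing potential `V_F`. -/
noncomputable def Ifun (b V_R V_F N : ℝ) : ℝ :=
  ∫ v in Set.Iic V_F,
    Real.exp (-(v - b * N) ^ 2 / 2) * ∫ w in (max v V_R)..V_F, Real.exp ((w - b * N) ^ 2 / 2)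

/-!
Write `m = b N`. Exchanging the order of integration over the region
`{v ≤ w, V_R ≤ w ≤ V_F}` (by parts, with primitive `v ↦ ∫_{-∞}^v e^{-(u-m)²/2} du`)
gives `I(N) = ∫_{V_R}^{V_F} e^{(w-m)²/2} ∫_{-∞}^w e^{-(v-m)²/2} dv dw`.
Completing the square and substituting `v = w - s`, the integrand equals
`∫_0^∞ e^{-s²/2 + (w-m)s} ds`; exchanging the order once more and integrating
`e^{ws}` over `[V_R, V_F]` produces the factor `s⁻¹ (e^{s V_F} - e^{s V_R})`.
-/

open Set

section

variable {E : Type*} [NormedAddCommGroup E] [NormedSpace ℝ E]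

theorem integral_Ioi_zero_comp_sub_left (f : ℝ → E) (c : ℝ) :
    ∫ s in Ioi 0, f (c - s) = ∫ v in Iic c, f v := by
  have h := (Measure.measurePreserving_sub_left volume c).setIntegral_preimage_emb
    (measurableEmbedding_subLeft c) f (Iic c)
  rw [← integral_Ici_eq_integral_Ioi, ← h]
  congr 1
  ext s
  simp

variable [CompleteSpace E]

theorem hasDerivAt_setIntegral_Iic {f : ℝ → E} (hf : Continuous f) (hfi : Integrable f)
    (x : ℝ) : HasDerivAt (fun y => ∫ v in Iic y, f v) (f x) x := by
  have hsplit :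
      (fun y => ∫ v in Iic y, f v) = fun y => (∫ v in Iic 0, f v) + ∫ v in 0..y, f v := by
    ext y
    rw [← intervalIntegral.integral_Iic_sub_Iic hfi.integrableOn hfi.integrableOn, add_sub_cancel]
  rw [hsplit]
  exact ((hf.integral_hasStrictDerivAt 0 x).hasDerivAt).const_add _

theorem hasDerivAt_intervalIntegral_left {g : ℝ → E} (hg : Continuous g) (c x : ℝ) :
    HasDerivAt (fun y => ∫ w in y..c, g w) (-g x) x :=
  intervalIntegral.integral_hasDerivAt_left (hg.intervalIntegrable _ _)
    (hg.stronglyMeasurableAtFilter _ _) hg.continuousAt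

end

theorem setIntegral_Iic_mul_intervalIntegral_max_swap {f g : ℝ → ℝ} (hf : Continuous f)
    (hfi : Integrable f) (hg : Continuous g) {a c : ℝ} (hac : a ≤ c) :
    ∫ v in Iic c, f v * ∫ w in (max v a)..c, g w =
      ∫ w in a..c, g w * ∫ v in Iic w, f v := by
  set Φ : ℝ → ℝ := fun y => ∫ v in Iic y, f v
  set G : ℝ → ℝ := fun y => ∫ w in y..c, g w
  have hΦ : ∀ x, HasDerivAt Φ (f x) x := hasDerivAt_setIntegral_Iic hf hfi
  have hG : ∀ x, HasDerivAt G (-g x) x := hasDerivAt_intervalIntegral_left hg c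
  have hGc : Continuous G := continuous_iff_continuousAt.2 fun x => (hG x).continuousAt
  have by_parts : ∫ v in a..c, f v * G v = (∫ w in a..c, g w * Φ w) - Φ a * G a := by
    have h := intervalIntegral.integral_mul_deriv_eq_deriv_mul (fun x _ => hΦ x)
      (fun x _ => hG x) (hf.intervalIntegrable a c) (hg.neg.intervalIntegrable a c)
    simp only [G, Φ, intervalIntegral.integral_same, mul_zero, zero_sub, mul_neg,
      intervalIntegral.integral_neg] at h ⊢
    simp_rw [mul_comm (g _)]
    linarith
  have on_Iic : ∫ v in Iic a, f v * G (max v a) = Φ a * G a := by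
    rw [← integral_mul_const]
    refine setIntegral_congr_fun measurableSet_Iic fun v hv => ?_
    rw [max_eq_right hv]
  have on_Ioc : ∫ v in Ioc a c, f v * G (max v a) = ∫ v in a..c, f v * G v := by
    rw [intervalIntegral.integral_of_le hac]
    refine setIntegral_congr_fun measurableSet_Ioc fun v hv => ?_
    rw [max_eq_left hv.1.le]
  have int_Iic : IntegrableOn (fun v => f v * G (max v a)) (Iic a) :=
    (hfi.mul_const (G a)).integrableOn.congr_fun
      (fun v hv => by simp only [max_eq_right (mem_Iic.1 hv)]) measurableSet_Iic
  have int_Ioc : IntegrableOn (fun v => f v * G (max v a)) (Ioc a c) :=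
    (hf.mul (hGc.comp (continuous_id.max continuous_const))).integrableOn_Ioc
  change ∫ v in Iic c, f v * G (max v a) = _
  rw [← Iic_union_Ioc_eq_Iic hac, setIntegral_union (Iic_disjoint_Ioc le_rfl) measurableSet_Ioc
    int_Iic int_Ioc, on_Iic, on_Ioc, by_parts, add_sub_cancel]

theorem integrable_exp_neg_sub_sq_div_two (m : ℝ) :
    Integrable fun v : ℝ => exp (-(v - m) ^ 2 / 2) := by
  refine ((integrable_exp_neg_mul_sq (one_half_pos (α := ℝ))).comp_sub_right m).congr
    (Eventually.of_forall fun v => ?_)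
  ring_nf

theorem integrable_exp_neg_sq_div_two_add_mul (x : ℝ) :
    Integrable fun s : ℝ => exp (-s ^ 2 / 2 + x * s) := by
  refine ((integrable_exp_neg_sub_sq_div_two x).const_mul (exp (x ^ 2 / 2))).congr
    (Eventually.of_forall fun s => ?_)
  simp only [← exp_add]
  ring_nf

theorem integral_Ioi_exp_neg_sq_div_two_add_mul (m w : ℝ) :
    ∫ s in Ioi 0, exp (-s ^ 2 / 2 + (w - m) * s) =
      exp ((w - m) ^ 2 / 2) * ∫ v in Iic w, exp (-(v - m) ^ 2 / 2) := by
  have complete_square : ∀ s : ℝ, exp (-s ^ 2 / 2 + (w - m) * s) =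
      exp ((w - m) ^ 2 / 2) * exp (-(w - s - m) ^ 2 / 2) := fun s => by
    rw [← exp_add]; ring_nf
  simp_rw [complete_square]
  rw [integral_const_mul, integral_Ioi_zero_comp_sub_left (fun v => exp (-(v - m) ^ 2 / 2))]

theorem intervalIntegral_exp_mul {s : ℝ} (hs : s ≠ 0) (a c : ℝ) :
    ∫ w in a..c, exp (w * s) = s⁻¹ * (exp (s * c) - exp (s * a)) := by
  rw [intervalIntegral.integral_comp_mul_right exp hs, integral_exp, smul_eq_mul,
    mul_comm c, mul_comm a]

theorem integral_Ioi_inv_mul_exp_sub_exp_eq {a c : ℝ} (hac : a ≤ c) (m : ℝ) :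
    ∫ s in Ioi (0 : ℝ),
        s⁻¹ * exp (-s ^ 2 / 2) * exp (-(s * m)) * (exp (s * c) - exp (s * a)) =
      ∫ w in a..c, ∫ s in Ioi 0, exp (-s ^ 2 / 2 + (w - m) * s) := by
  set k : ℝ → ℝ → ℝ := fun s w => exp (-s ^ 2 / 2 + (w - m) * s)
  have inner_eq : ∀ s ∈ Ioi (0 : ℝ),
      s⁻¹ * exp (-s ^ 2 / 2) * exp (-(s * m)) * (exp (s * c) - exp (s * a)) =
        ∫ w in Ioc a c, k s w := fun s hs => by
    have factor : ∀ w, k s w = exp (-s ^ 2 / 2) * exp (-(s * m)) * exp (w * s) := fun w => by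
      simp only [k, ← exp_add]; ring_nf
    rw [← intervalIntegral.integral_of_le hac]
    simp_rw [factor]
    rw [intervalIntegral.integral_const_mul, intervalIntegral_exp_mul hs.ne']
    ring
  have hk : Integrable (Function.uncurry k)
      ((volume.restrict (Ioi 0)).prod (volume.restrict (Ioc a c))) := by
    have dom :=
      ((integrable_exp_neg_sq_div_two_add_mul (c - m)).restrict (s := Ioi 0)).mul_prod
        (integrable_const (1 : ℝ) : Integrable _ (volume.restrict (Ioc a c)))
    refine dom.mono' (by fun_prop) ?_
    rw [Measure.prod_restrict, ae_restrict_iff' (measurableSet_Ioi.prod measurableSet_Ioc)]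
    refine Eventually.of_forall fun ⟨s, w⟩ ⟨hs, hw⟩ => ?_
    simp only [Function.uncurry_apply_pair, k, norm_eq_abs, abs_exp, mul_one, exp_le_exp]
    gcongr
    exacts [hs.le, hw.2]
  rw [setIntegral_congr_fun measurableSet_Ioi inner_eq, integral_integral_swap hk,
    intervalIntegral.integral_of_le hac]

theorem Ifun_eq_integral_Ioi_general (b V_R V_F : ℝ) (hV : V_R < V_F) (N : ℝ) :
    Ifun b V_R V_F N =
      ∫ s in Set.Ioi (0 : ℝ),
        s⁻¹ * Real.exp (-s ^ 2 / 2) * Real.exp (-(s * b * N)) *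
          (Real.exp (s * V_F) - Real.exp (s * V_R)) := by
  simp_rw [mul_assoc _ b N]
  rw [Ifun, setIntegral_Iic_mul_intervalIntegral_max_swap (by fun_prop)
    (integrable_exp_neg_sub_sq_div_two (b * N)) (by fun_prop) hV.le,
    integral_Ioi_inv_mul_exp_sub_exp_eq hV.le]
  simp_rw [integral_Ioi_exp_neg_sq_div_two_add_mul]

/-- For every `b ∈ ℝ`, `V_R < V_F` and `N ≥ 0`, the double integral `I(N)` admits the
one-dimensional representation
`I(N) = ∫_0^∞ s⁻¹ e^{-s²/2} e^{-sbN} (e^{s V_F} − e^{s V_R}) ds`. -/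
theorem Ifun_eq_integral_Ioi (b V_R V_F : ℝ) (hV : V_R < V_F) (N : ℝ) (hN : 0 ≤ N) :
    Ifun b V_R V_F N =
      ∫ s in Set.Ioi (0 : ℝ),
        s⁻¹ * Real.exp (-s ^ 2 / 2) * Real.exp (-(s * b * N)) *
          (Real.exp (s * V_F) - Real.exp (s * V_R)) :=
  Ifun_eq_integral_Ioi_general b V_R V_F hV N
end

section
/- If b > 0 then I is strictly decreasing on [0,∞) (equivalently, N ↦ 1/I(N) is strictly increasing), and if b < 0 then I is strictly increasing on [0,∞) (equivalently, N ↦ 1/I(N) is strictly decreasing). -/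
open MeasureTheory Real Filter

/-!
Writing `c = b N`, the integrand of `I` at `v` equals
`∫_{max(v, V_R)}^{V_F} exp ((w - v) (w + v - 2c) / 2) dw`, and since `w ≥ v` on the range of
integration this is strictly decreasing in `c` whenever `v < V_F`. Hence `I(N) = J(b N)` for a
positive, strictly decreasing `J`, and the sign of `b` decides the monotonicity of `I` and `1 / I`.
-/

open Set intervalIntegral

theorem setIntegral_lt_setIntegral_of_forall_lt {X : Type*} [MeasurableSpace X]
    {μ : Measure X} {s : Set X} {f g : X → ℝ} (hs : MeasurableSet s) (hμs : μ s ≠ 0)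
    (hf : IntegrableOn f s μ) (hg : IntegrableOn g s μ) (hlt : ∀ x ∈ s, f x < g x) :
    ∫ x in s, f x ∂μ < ∫ x in s, g x ∂μ := by
  have hpos : ∀ x ∈ s, 0 < g x - f x := fun x hx => sub_pos.2 (hlt x hx)
  rw [← sub_pos, ← integral_sub hg hf, setIntegral_pos_iff_support_of_nonneg_ae
    (ae_restrict_of_forall_mem hs fun x hx => (hpos x hx).le) (hg.sub hf),
    inter_eq_right.2 fun x hx => Function.mem_support.2 (hpos x hx).ne']
  exact pos_iff_ne_zero.2 hμs

theorem continuous_intervalIntegral_of_continuous_lower {f g : ℝ → ℝ} (hf : Continuous f)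
    (hg : Continuous g) (b : ℝ) : Continuous fun v => ∫ w in (g v)..b, f w := by
  have hsymm : (fun v => ∫ w in (g v)..b, f w) = fun v => -∫ w in b..(g v), f w :=
    funext fun v => integral_symm _ _
  rw [hsymm]
  exact (continuous_parametric_intervalIntegral_of_continuous (f := fun (_ : ℝ) => f)
    (by fun_prop) hg).neg

noncomputable def gaussIntegrand (V_R V_F c v : ℝ) : ℝ :=
  exp (-(v - c) ^ 2 / 2) * ∫ w in (max v V_R)..V_F, exp ((w - c) ^ 2 / 2)

noncomputable def gaussIntegral (V_R V_F c : ℝ) : ℝ :=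
  ∫ v in Iic V_F, gaussIntegrand V_R V_F c v

namespace gaussIntegrand

variable {V_R V_F : ℝ}

theorem eq_intervalIntegral (c v : ℝ) :
    gaussIntegrand V_R V_F c v =
      ∫ w in (max v V_R)..V_F, exp ((w - v) * (w + v - 2 * c) / 2) := by
  rw [gaussIntegrand, ← intervalIntegral.integral_const_mul]
  congr 1 with w
  rw [← exp_add]
  ring_nf

theorem pos (hV : V_R < V_F) (c : ℝ) {v : ℝ} (hv : v < V_F) : 0 < gaussIntegrand V_R V_F c v :=
  mul_pos (exp_pos _) <| intervalIntegral_pos_of_pos (Continuous.intervalIntegrable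
    (by fun_prop) _ _) (fun _ => exp_pos _) (max_lt hv hV)

theorem strictAnti (hV : V_R < V_F) {v : ℝ} (hv : v < V_F) :
    StrictAnti fun c => gaussIntegrand V_R V_F c v := by
  intro c₁ c₂ hc
  simp only [eq_intervalIntegral]
  have hmax : max v V_R < V_F := max_lt hv hV
  refine integral_lt_integral_of_continuousOn_of_le_of_exists_lt hmax
    (Continuous.continuousOn (by fun_prop)) (Continuous.continuousOn (by fun_prop)) ?_
    ⟨V_F, ⟨hmax.le, le_rfl⟩, exp_lt_exp.2 (by nlinarith)⟩
  intro w hw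
  have hvw : v < w := (le_max_left v V_R).trans_lt hw.1
  exact exp_le_exp.2 (by nlinarith)

theorem integrableOn_Iic (hV : V_R ≤ V_F) (c : ℝ) :
    IntegrableOn (gaussIntegrand V_R V_F c) (Iic V_F) := by
  obtain ⟨C, hC⟩ := isCompact_Icc.exists_bound_of_continuousOn
    (f := fun w => exp ((w - c) ^ 2 / 2)) (s := Icc V_R V_F) (by fun_prop)
  have hgauss : Integrable fun v : ℝ => exp (-(v - c) ^ 2 / 2) := by
    simpa [neg_div, div_eq_inv_mul] using
      (integrable_exp_neg_mul_sq (b := 2⁻¹) (by norm_num)).comp_sub_right c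
  have hinner : Continuous fun v => ∫ w in (max v V_R)..V_F, exp ((w - c) ^ 2 / 2) :=
    continuous_intervalIntegral_of_continuous_lower (by fun_prop) (by fun_prop) V_F
  refine hgauss.integrableOn.mul_bdd (c := C * (V_F - V_R)) hinner.aestronglyMeasurable
    (ae_restrict_of_forall_mem measurableSet_Iic fun v (hv : v ≤ V_F) => ?_)
  have hsub : uIoc (max v V_R) V_F ⊆ Icc V_R V_F := by
    rw [uIoc_of_le (max_le hv hV)]
    exact Ioc_subset_Icc_self.trans (Icc_subset_Icc_left (le_max_right v V_R))
  calc _ ≤ C * |V_F - max v V_R| := norm_integral_le_of_norm_le_const fun w hw => hC w (hsub hw)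
    _ ≤ C * (V_F - V_R) := by
      have : 0 ≤ C := (norm_nonneg _).trans (hC V_F ⟨hV, le_rfl⟩)
      rw [abs_of_nonneg (sub_nonneg.2 (max_le hv hV))]
      gcongr
      exact le_max_right v V_R

end gaussIntegrand

namespace gaussIntegral

variable {V_R V_F : ℝ}

theorem eq_setIntegral_Iio (c : ℝ) :
    gaussIntegral V_R V_F c = ∫ v in Iio V_F, gaussIntegrand V_R V_F c v :=
  integral_Iic_eq_integral_Iio

theorem pos (hV : V_R < V_F) (c : ℝ) : 0 < gaussIntegral V_R V_F c := by
  rw [eq_setIntegral_Iio]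
  simpa using setIntegral_lt_setIntegral_of_forall_lt measurableSet_Iio (by simp)
    integrableOn_zero ((gaussIntegrand.integrableOn_Iic hV.le c).mono_set Iio_subset_Iic_self)
    fun v hv => gaussIntegrand.pos hV c hv

theorem strictAnti (hV : V_R < V_F) : StrictAnti (gaussIntegral V_R V_F) := by
  intro c₁ c₂ hc
  simp only [eq_setIntegral_Iio]
  exact setIntegral_lt_setIntegral_of_forall_lt measurableSet_Iio (by simp)
    ((gaussIntegrand.integrableOn_Iic hV.le c₂).mono_set Iio_subset_Iic_self)
    ((gaussIntegrand.integrableOn_Iic hV.le c₁).mono_set Iio_subset_Iic_self)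
    fun v hv => gaussIntegrand.strictAnti hV hv hc

end gaussIntegral

theorem Ifun_eq_gaussIntegral (b V_R V_F N : ℝ) :
    Ifun b V_R V_F N = gaussIntegral V_R V_F (b * N) :=
  rfl

/-- If `b > 0` then `I` is strictly decreasing on `[0,∞)` (equivalently `N ↦ 1/I(N)` is
strictly increasing there), and if `b < 0` then `I` is strictly increasing on `[0,∞)`
(equivalently `N ↦ 1/I(N)` is strictly decreasing there). -/
theorem Ifun_strict_monotonicity (b V_R V_F : ℝ) (hV : V_R < V_F) :
    (0 < b →
      StrictAntiOn (fun N => Ifun b V_R V_F N) (Set.Ici 0) ∧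
      StrictMonoOn (fun N => 1 / Ifun b V_R V_F N) (Set.Ici 0)) ∧
    (b < 0 →
      StrictMonoOn (fun N => Ifun b V_R V_F N) (Set.Ici 0) ∧
      StrictAntiOn (fun N => 1 / Ifun b V_R V_F N) (Set.Ici 0)) := by
  have hpos (N : ℝ) : 0 < Ifun b V_R V_F N := gaussIntegral.pos hV _
  simp only [Ifun_eq_gaussIntegral] at hpos ⊢
  refine ⟨fun hb => ?_, fun hb => ?_⟩
  · have hanti : StrictAnti fun N => gaussIntegral V_R V_F (b * N) :=
      (gaussIntegral.strictAnti hV).comp_strictMono (strictMono_mul_left_of_pos hb)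
    exact ⟨hanti.strictAntiOn _,
      fun x _ y _ hxy => one_div_lt_one_div_of_lt (hpos y) (hanti hxy)⟩
  · have hmono : StrictMono fun N => gaussIntegral V_R V_F (b * N) :=
      (gaussIntegral.strictAnti hV).comp (strictAnti_mul_left hb)
    exact ⟨hmono.strictMonoOn _,
      fun x _ y _ hxy => one_div_lt_one_div_of_lt (hpos x) (hmono hxy)⟩
end

section
/- If b > 0, then I(N) → 0 as N → ∞; equivalently, 1/I(N) → +∞ as N → ∞. -/
open MeasureTheory Real Filter

open Set

noncomputable def ifunIntegrand (μ V_R V_F v : ℝ) : ℝ :=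
  exp (-(v - μ) ^ 2 / 2) * ∫ w in (max v V_R)..V_F, exp ((w - μ) ^ 2 / 2)

lemma Ifun_eq_integral_ifunIntegrand (b V_R V_F N : ℝ) :
    Ifun b V_R V_F N = ∫ v in Iic V_F, ifunIntegrand (b * N) V_R V_F v := rfl

section

variable {μ V_R V_F v : ℝ}

lemma continuous_ifunIntegrand (μ V_R V_F : ℝ) : Continuous (ifunIntegrand μ V_R V_F) := by
  have hf : Continuous fun w : ℝ => exp ((w - μ) ^ 2 / 2) := by fun_prop
  have hprim := intervalIntegral.continuous_primitive (μ := volume)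
    (fun a b => hf.intervalIntegrable a b) V_F
  have hinner : Continuous fun v : ℝ => ∫ w in (max v V_R)..V_F, exp ((w - μ) ^ 2 / 2) := by
    simp_rw [intervalIntegral.integral_symm V_F]
    exact (hprim.comp (continuous_id.max continuous_const)).neg
  exact (by fun_prop : Continuous fun v : ℝ => exp (-(v - μ) ^ 2 / 2)).mul hinner

lemma ifunIntegrand_nonneg (hV : V_R ≤ V_F) (hv : v ≤ V_F) : 0 ≤ ifunIntegrand μ V_R V_F v :=
  mul_nonneg (exp_pos _).le <|
    intervalIntegral.integral_nonneg (max_le hv hV) fun _ _ => (exp_pos _).le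

lemma ifunIntegrand_pos (hV : V_R < V_F) (hv : v < V_F) : 0 < ifunIntegrand μ V_R V_F v :=
  mul_pos (exp_pos _) <| intervalIntegral.intervalIntegral_pos_of_pos
    ((by fun_prop : Continuous fun w : ℝ => exp ((w - μ) ^ 2 / 2)).intervalIntegrable _ _)
    (fun _ => exp_pos _) (max_lt hv hV)

lemma neg_sq_sub_add_sq_sub_le {μ v w V_F : ℝ} (hvw : v ≤ w) (hw : w ≤ V_F) :
    -(v - μ) ^ 2 / 2 + (w - μ) ^ 2 / 2 ≤ (μ - V_F) * v - (μ - V_F) * w := by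
  nlinarith [mul_nonneg (sub_nonneg.2 hvw) (sub_nonneg.2 hw)]

lemma ifunIntegrand_le (hV : V_R ≤ V_F) (hc : 1 ≤ μ - V_F) (hv : v ≤ V_F) :
    ifunIntegrand μ V_R V_F v ≤ exp (v - V_R) / (μ - V_F) := by
  set c := μ - V_F
  set m := max v V_R
  have hc0 : 0 < c := one_pos.trans_le hc
  have hvm : v ≤ m := le_max_left _ _
  have hmF : m ≤ V_F := max_le hv hV
  calc ifunIntegrand μ V_R V_F v
      = ∫ w in m..V_F, exp (-(v - μ) ^ 2 / 2) * exp ((w - μ) ^ 2 / 2) :=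
        (intervalIntegral.integral_const_mul _ _).symm
    _ ≤ ∫ w in m..V_F, exp (c * v - c * w) := by
        refine intervalIntegral.integral_mono_on hmF
          (Continuous.intervalIntegrable (by fun_prop) _ _)
          (Continuous.intervalIntegrable (by fun_prop) _ _) fun w hw => ?_
        rw [← exp_add]
        exact exp_le_exp.2 (neg_sq_sub_add_sq_sub_le (hvm.trans hw.1) hw.2)
    _ = c⁻¹ * (exp (c * v - c * m) - exp (c * v - c * V_F)) := by
        rw [intervalIntegral.integral_comp_sub_mul (fun x => exp x) hc0.ne', integral_exp,
          smul_eq_mul]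
    _ ≤ c⁻¹ * exp (c * v - c * m) := by
        gcongr
        linarith [exp_pos (c * v - c * V_F)]
    _ ≤ c⁻¹ * exp (v - V_R) := by
        gcongr c⁻¹ * exp ?_
        nlinarith [le_max_right v V_R, mul_nonneg (sub_nonneg.2 hc) (sub_nonneg.2 hvm)]
    _ = exp (v - V_R) / c := inv_mul_eq_div _ _

lemma integrableOn_exp_sub_div_Iic (V_R V_F c : ℝ) :
    IntegrableOn (fun v => exp (v - V_R) / c) (Iic V_F) := by
  simp_rw [exp_sub]
  exact ((integrableOn_exp_Iic V_F).div_const _).div_const _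

lemma integrableOn_ifunIntegrand (hV : V_R ≤ V_F) (hc : 1 ≤ μ - V_F) :
    IntegrableOn (ifunIntegrand μ V_R V_F) (Iic V_F) := by
  refine (integrableOn_exp_sub_div_Iic V_R V_F (μ - V_F)).mono'
    (continuous_ifunIntegrand μ V_R V_F).aestronglyMeasurable.restrict ?_
  filter_upwards [ae_restrict_mem measurableSet_Iic] with v hv
  rw [norm_of_nonneg (ifunIntegrand_nonneg hV hv)]
  exact ifunIntegrand_le hV hc hv

lemma setIntegral_ifunIntegrand_le (hV : V_R ≤ V_F) (hc : 1 ≤ μ - V_F) :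
    ∫ v in Iic V_F, ifunIntegrand μ V_R V_F v ≤ exp (V_F - V_R) / (μ - V_F) := by
  calc ∫ v in Iic V_F, ifunIntegrand μ V_R V_F v
      ≤ ∫ v in Iic V_F, exp (v - V_R) / (μ - V_F) :=
        setIntegral_mono_on (integrableOn_ifunIntegrand hV hc)
          (integrableOn_exp_sub_div_Iic V_R V_F _) measurableSet_Iic
          fun v hv => ifunIntegrand_le hV hc hv
    _ = exp (V_F - V_R) / (μ - V_F) := by
        simp_rw [exp_sub]
        rw [integral_div, integral_div, integral_exp_Iic]

lemma setIntegral_ifunIntegrand_pos (hV : V_R < V_F) (hc : 1 ≤ μ - V_F) :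
    0 < ∫ v in Iic V_F, ifunIntegrand μ V_R V_F v := by
  rw [setIntegral_pos_iff_support_of_nonneg_ae
    ((ae_restrict_mem measurableSet_Iic).mono fun _ hv => ifunIntegrand_nonneg hV.le hv)
    (integrableOn_ifunIntegrand hV.le hc)]
  have hIio : Iio V_F ⊆ Function.support (ifunIntegrand μ V_R V_F) ∩ Iic V_F :=
    fun v hv => ⟨(ifunIntegrand_pos hV hv).ne', mem_Iic.2 hv.le⟩
  exact (Measure.measure_Iio_pos volume V_F).trans_le (measure_mono hIio)

end

/-- If `b > 0`, then `I(N) → 0` as `N → ∞`; equivalently, `1/I(N) → +∞` as `N → ∞`. -/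
theorem Ifun_tendsto_zero_atTop (b V_R V_F : ℝ) (hV : V_R < V_F) (hb : 0 < b) :
    Tendsto (fun N => Ifun b V_R V_F N) atTop (nhds 0) ∧
    Tendsto (fun N => 1 / Ifun b V_R V_F N) atTop atTop := by
  simp_rw [Ifun_eq_integral_ifunIntegrand, one_div]
  have hdrift : Tendsto (fun N => b * N - V_F) atTop atTop :=
    tendsto_atTop_add_const_right atTop (-V_F) (tendsto_id.const_mul_atTop hb)
  have hc : ∀ᶠ N in atTop, 1 ≤ b * N - V_F := hdrift.eventually_ge_atTop 1
  have hpos : ∀ᶠ N in atTop, ∫ v in Iic V_F, ifunIntegrand (b * N) V_R V_F v ∈ Ioi 0 :=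
    hc.mono fun N hN => setIntegral_ifunIntegrand_pos hV hN
  have hzero :
      Tendsto (fun N => ∫ v in Iic V_F, ifunIntegrand (b * N) V_R V_F v) atTop (nhds 0) :=
    squeeze_zero' (hpos.mono fun _ hN => le_of_lt hN)
      (hc.mono fun N hN => setIntegral_ifunIntegrand_le hV.le hN)
      (tendsto_const_nhds.div_atTop hdrift)
  exact ⟨hzero, (tendsto_nhdsWithin_iff.2 ⟨hzero, hpos⟩).inv_tendsto_nhdsGT_zero⟩
end

section
/- If b ≤ 0, then the equation N·I(N) = 1 has exactly one solution N* in [0,∞), and N* > 0; equivalently, the map f(N) := 1/I(N) has a unique fixed point on [0,∞). Moreover this fixed point lies in the interval (0, 1/I(0)]. -/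
/-!
For `v ≤ w` the integrand of `I(N)` is `exp ((w - v) * ((w + v) / 2 - b * N))`, which is
nondecreasing in `N` when `b ≤ 0`. Hence `I` is positive and nondecreasing, and
`N ↦ N * I(N)` is strictly increasing on `[0, ∞)`, vanishes at `0` and is at least `2` at
`N = 2 / I(0)`. Since `I` is continuous (dominated convergence against a Gaussian), the
intermediate value theorem yields exactly one root of `N * I(N) = 1`, and it satisfies
`N * I(0) ≤ N * I(N) = 1`.
-/

open MeasureTheory Real Filter

open Set Topology

section MulEqOne

variable {I : ℝ → ℝ}

theorem strictMonoOn_mul_of_monotoneOn (hI : MonotoneOn I (Ici 0)) (hI0 : 0 < I 0) :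
    StrictMonoOn (fun N => N * I N) (Ici 0) := by
  intro x hx y hy hxy
  have hIy : 0 < I y := hI0.trans_le (hI self_mem_Ici hy hy)
  calc x * I x ≤ x * I y := mul_le_mul_of_nonneg_left (hI hx hy hxy.le) hx
    _ < y * I y := mul_lt_mul_of_pos_right hxy hIy

theorem existsUnique_mul_eq_one (hI : MonotoneOn I (Ici 0)) (hI0 : 0 < I 0)
    (hc : ContinuousOn I (Ici 0)) : ∃! N, 0 ≤ N ∧ N * I N = 1 := by
  have hN₀ : (0 : ℝ) ≤ 2 / I 0 := by positivity
  obtain ⟨N, ⟨hN, -⟩, hNI⟩ : ∃ N ∈ Icc 0 (2 / I 0), N * I N = 1 := by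
    refine intermediate_value_Icc hN₀ ((continuousOn_id.mul hc).mono Icc_subset_Ici_self)
      ⟨by simp, ?_⟩
    calc (1 : ℝ) ≤ 2 / I 0 * I 0 := by rw [div_mul_cancel₀ _ hI0.ne']; norm_num
      _ ≤ 2 / I 0 * I (2 / I 0) := mul_le_mul_of_nonneg_left (hI self_mem_Ici hN₀ hN₀) hN₀
  exact ⟨N, ⟨hN, hNI⟩, fun M ⟨hM, hMI⟩ =>
    (strictMonoOn_mul_of_monotoneOn hI hI0).injOn hM hN (hMI.trans hNI.symm)⟩

theorem pos_and_le_one_div_of_mul_eq_one (hI : MonotoneOn I (Ici 0)) (hI0 : 0 < I 0) {N : ℝ}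
    (hN : 0 ≤ N) (h : N * I N = 1) : 0 < N ∧ N ≤ 1 / I 0 := by
  refine ⟨hN.lt_of_ne (by rintro rfl; simp at h), ?_⟩
  rw [le_div_iff₀ hI0]
  calc N * I 0 ≤ N * I N := mul_le_mul_of_nonneg_left (hI self_mem_Ici hN hN) hN
    _ = 1 := h

end MulEqOne

theorem exp_neg_sq_sub_div_two_le {v c A : ℝ} (hc : |c| ≤ A) :
    exp (-(v - c) ^ 2 / 2) ≤ exp (A ^ 2 / 2) * exp (-(1 / 4) * v ^ 2) := by
  rw [← exp_add, exp_le_exp]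
  have hcA : c ^ 2 ≤ A ^ 2 := sq_le_sq' (neg_le_of_abs_le hc) (le_of_abs_le hc)
  nlinarith [sq_nonneg (v - 2 * c)]

noncomputable def IfunIntegrand (b V_R V_F N v : ℝ) : ℝ :=
  exp (-(v - b * N) ^ 2 / 2) * ∫ w in (max v V_R)..V_F, exp ((w - b * N) ^ 2 / 2)

section Ifun

variable {b V_R V_F : ℝ}

theorem Ifun_eq_setIntegral (N : ℝ) :
    Ifun b V_R V_F N = ∫ v in Iic V_F, IfunIntegrand b V_R V_F N v := rfl

theorem continuous_IfunIntegrand : Continuous (Function.uncurry (IfunIntegrand b V_R V_F)) := by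
  have hinner : Continuous fun p : ℝ × ℝ =>
      ∫ w in V_F..(max p.2 V_R), exp ((w - b * p.1) ^ 2 / 2) :=
    intervalIntegral.continuous_parametric_intervalIntegral_of_continuous
      (by fun_prop) (by fun_prop)
  refine (Continuous.mul (f := fun p : ℝ × ℝ => exp (-(p.2 - b * p.1) ^ 2 / 2)) (by fun_prop)
    hinner.neg).congr fun p => ?_
  simp only [IfunIntegrand, Function.uncurry, Pi.mul_apply, Pi.neg_apply,
    intervalIntegral.integral_symm V_F]

theorem IfunIntegrand_nonneg (hV : V_R ≤ V_F) {N v : ℝ} (hv : v ≤ V_F) :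
    0 ≤ IfunIntegrand b V_R V_F N v :=
  mul_nonneg (exp_nonneg _)
    (intervalIntegral.integral_nonneg (max_le hv hV) fun _ _ => (exp_pos _).le)

theorem IfunIntegrand_pos (hV : V_R < V_F) {N v : ℝ} (hv : v < V_F) :
    0 < IfunIntegrand b V_R V_F N v :=
  mul_pos (exp_pos _) <| intervalIntegral.intervalIntegral_pos_of_pos_on
    (Continuous.intervalIntegrable (by fun_prop) _ _) (fun _ _ => exp_pos _) (max_lt hv hV)

theorem IfunIntegrand_eq_integral (N v : ℝ) :
    IfunIntegrand b V_R V_F N v =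
      ∫ w in (max v V_R)..V_F, exp ((w - v) * ((w + v) / 2 - b * N)) := by
  rw [IfunIntegrand, ← intervalIntegral.integral_const_mul]
  congr 1 with w
  rw [← exp_add]
  ring_nf

theorem monotone_IfunIntegrand (hb : b ≤ 0) (hV : V_R ≤ V_F) {v : ℝ} (hv : v ≤ V_F) :
    Monotone fun N => IfunIntegrand b V_R V_F N v := by
  intro N₁ N₂ hN
  simp only [IfunIntegrand_eq_integral]
  refine intervalIntegral.integral_mono_on (max_le hv hV)
    (Continuous.intervalIntegrable (by fun_prop) _ _)
    (Continuous.intervalIntegrable (by fun_prop) _ _) fun w hw => exp_le_exp.2 ?_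
  have hvw : 0 ≤ w - v := sub_nonneg.2 ((le_max_left _ _).trans hw.1)
  exact mul_le_mul_of_nonneg_left (by nlinarith) hvw

theorem exists_norm_IfunIntegrand_le_gaussian (hV : V_R ≤ V_F) (R : ℝ) :
    ∃ C, ∀ N, |N| ≤ R → ∀ᵐ v ∂(volume.restrict (Iic V_F)),
      ‖IfunIntegrand b V_R V_F N v‖ ≤ C * exp (-(1 / 4) * v ^ 2) := by
  set A := |b| * R
  set M := max |V_R| |V_F| + A
  refine ⟨exp (A ^ 2 / 2) * ((V_F - V_R) * exp (M ^ 2 / 2)), fun N hN => ?_⟩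
  rw [ae_restrict_iff' measurableSet_Iic]
  refine Eventually.of_forall fun v (hv : v ≤ V_F) => ?_
  have hbN : |b * N| ≤ A := by rw [abs_mul]; exact mul_le_mul_of_nonneg_left hN (abs_nonneg b)
  have hinner : ∫ w in (max v V_R)..V_F, exp ((w - b * N) ^ 2 / 2) ≤
      (V_F - V_R) * exp (M ^ 2 / 2) := by
    calc _ ≤ ∫ _ in (max v V_R)..V_F, exp (M ^ 2 / 2) := by
          refine intervalIntegral.integral_mono_on (max_le hv hV)
            (Continuous.intervalIntegrable (by fun_prop) _ _) intervalIntegrable_const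
            fun w hw => ?_
          have hw' : |w| ≤ max |V_R| |V_F| :=
            abs_le_max_abs_abs ((le_max_right _ _).trans hw.1) hw.2
          have hwM : |w - b * N| ≤ M := (abs_sub _ _).trans (add_le_add hw' hbN)
          have := sq_le_sq' (neg_le_of_abs_le hwM) (le_of_abs_le hwM)
          exact exp_le_exp.2 (by linarith)
      _ ≤ (V_F - V_R) * exp (M ^ 2 / 2) := by
          rw [intervalIntegral.integral_const, smul_eq_mul]
          gcongr
          exact le_max_right _ _
  rw [Real.norm_of_nonneg (IfunIntegrand_nonneg hV hv), IfunIntegrand, mul_right_comm]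
  exact mul_le_mul (exp_neg_sq_sub_div_two_le hbN) hinner
    (intervalIntegral.integral_nonneg (max_le hv hV) fun _ _ => (exp_pos _).le) (by positivity)

theorem integrable_const_mul_gaussian (C : ℝ) :
    Integrable fun v : ℝ => C * exp (-(1 / 4) * v ^ 2) :=
  (integrable_exp_neg_mul_sq (by norm_num)).const_mul C

theorem integrableOn_IfunIntegrand (hV : V_R ≤ V_F) (N : ℝ) :
    IntegrableOn (IfunIntegrand b V_R V_F N) (Iic V_F) := by
  obtain ⟨C, hC⟩ := exists_norm_IfunIntegrand_le_gaussian (b := b) hV |N|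
  exact (integrable_const_mul_gaussian C).integrableOn.mono'
    (continuous_IfunIntegrand.uncurry_left N).aestronglyMeasurable (hC N le_rfl)

theorem Ifun_pos (hV : V_R < V_F) (N : ℝ) : 0 < Ifun b V_R V_F N := by
  have hnonneg : 0 ≤ᵐ[volume.restrict (Iic V_F)] IfunIntegrand b V_R V_F N :=
    (ae_restrict_iff' measurableSet_Iic).2
      (Eventually.of_forall fun _ hv => IfunIntegrand_nonneg hV.le hv)
  rw [Ifun_eq_setIntegral, setIntegral_pos_iff_support_of_nonneg_ae hnonneg
    (integrableOn_IfunIntegrand hV.le N)]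
  calc (0 : ENNReal) < volume (Iio V_F) := by simp
    _ ≤ volume (Function.support (IfunIntegrand b V_R V_F N) ∩ Iic V_F) :=
      measure_mono fun v (hv : v < V_F) => ⟨(IfunIntegrand_pos hV hv).ne', hv.le⟩

theorem monotone_Ifun (hb : b ≤ 0) (hV : V_R ≤ V_F) : Monotone (Ifun b V_R V_F) :=
  fun N₁ N₂ hN => setIntegral_mono_on (integrableOn_IfunIntegrand hV N₁)
    (integrableOn_IfunIntegrand hV N₂) measurableSet_Iic fun _ hv =>
      monotone_IfunIntegrand hb hV hv hN

theorem continuous_Ifun (hV : V_R ≤ V_F) : Continuous (Ifun b V_R V_F) := by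
  refine continuous_iff_continuousAt.2 fun N₀ => ?_
  obtain ⟨C, hC⟩ := exists_norm_IfunIntegrand_le_gaussian (b := b) hV (|N₀| + 1)
  have hnear : ∀ᶠ N in 𝓝 N₀, |N| ≤ |N₀| + 1 :=
    (continuous_abs.tendsto N₀).eventually (eventually_le_nhds (lt_add_one _))
  exact continuousAt_of_dominated
    (Eventually.of_forall fun N =>
      (continuous_IfunIntegrand.uncurry_left N).aestronglyMeasurable)
    (hnear.mono hC) (integrable_const_mul_gaussian C).integrableOn
    (ae_of_all _ fun v => (continuous_IfunIntegrand.uncurry_right v).continuousAt)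

end Ifun

/-- If `b ≤ 0`, the equation `N·I(N) = 1` has exactly one solution `N*` on `[0,∞)`;
equivalently `f(N) = 1/I(N)` has a unique fixed point on `[0,∞)`. Moreover this
solution lies in the interval `(0, 1/I(0)]`. -/
theorem Ifun_unique_equilibrium (b V_R V_F : ℝ) (hV : V_R < V_F) (hb : b ≤ 0) :
    (∃! N : ℝ, 0 ≤ N ∧ N * Ifun b V_R V_F N = 1) ∧
    (∃! N : ℝ, 0 ≤ N ∧ 1 / Ifun b V_R V_F N = N) ∧
    (∀ N : ℝ, 0 ≤ N → N * Ifun b V_R V_F N = 1 →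
      0 < N ∧ N ≤ 1 / Ifun b V_R V_F 0) := by
  have hmono := (monotone_Ifun hb hV.le).monotoneOn (Ici 0)
  have hI0 := Ifun_pos (b := b) hV 0
  have hex := existsUnique_mul_eq_one hmono hI0 (continuous_Ifun hV.le).continuousOn
  have hfix (N : ℝ) : N * Ifun b V_R V_F N = 1 ↔ 1 / Ifun b V_R V_F N = N := by
    rw [div_eq_iff (Ifun_pos hV N).ne', eq_comm]
  exact ⟨hex, (existsUnique_congr fun N => and_congr_right fun _ => hfix N).1 hex,
    fun _ hN h => pos_and_le_one_div_of_mul_eq_one hmono hI0 hN h⟩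
end

section
/- Let {N_{k,∞}} be a firing rate sequence whose odd-indexed subsequence converges to N⁻ > 0 and whose even-indexed subsequence converges to N⁺ > 0 (so 1/I(N⁻) = N⁺ and 1/I(N⁺) = N⁻), and set p_{k,∞} := h(·, N_{k−1,∞}) for k ≥ 1. Then there exist constants C⁻, C⁺ > 0 (depending on N⁻, N⁺, b, V_R, V_F) and an index k₀ such that for all k ≥ k₀: sup_{v ≤ V_F} |p_{2k,∞}(v) − p_{2k−2,∞}(v)| ≤ C⁻ |N_{2k−1,∞} − N_{2k−3,∞}|, sup_{v ≤ V_F} |p_{2k+1,∞}(v) − p_{2k−1,∞}(v)| ≤ C⁺ |N_{2k,∞} − N_{2k−2,∞}|, sup_{v ≤ V_F} |p_{2k,∞}(v) − h(v,N⁻)| ≤ C⁻ |N_{2k−1,∞} − N⁻|, and sup_{v ≤ V_F} |p_{2k+1,∞}(v) − h(v,N⁺)| ≤ C⁺ |N_{2k,∞} − N⁺|; in particular the even-indexed pseudo-equilibria converge uniformly to the pseudo-equilibrium associated to N⁻ and the odd-indexed ones to the pseudo-equilibrium associated to N⁺. -/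
open MeasureTheory Real Filter

/-- The pseudo-equilibrium `h(·,N)` associated to a firing rate `N`. -/
noncomputable def pseudoEq (b V_R V_F N v : ℝ) : ℝ :=
  (1 / Ifun b V_R V_F N) * Real.exp (-(v - b * N) ^ 2 / 2) *
    ∫ w in (max v V_R)..V_F, Real.exp ((w - b * N) ^ 2 / 2)

/-!
Writing `m = b N`, one has `h(·, N) = φ_m / ∫ φ_m` (`profile`, `profileMass`) with
`φ_m(v) = e^{-(v-m)²/2} ∫_{max(v,V_R)}^{V_F} e^{(w-m)²/2} dw`. For `|m| ≤ B` and `v ≤ V_F`, both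
`φ_m(v)` and `∂_m φ_m(v)` are bounded by a multiple of `(1 + |v|) e^{-v²/4}`, because
`e^{-(v-m)²/2} ≤ e^{m²/2} e^{-v²/4}` and the inner integral only sees `w ∈ [V_R, V_F]`. By the
mean value theorem `φ_m(v)` and the mass `∫ φ_m` are Lipschitz in `m`, uniformly in `v`; the mass
is positive, hence bounded below on compacts, so `h(·, N)` is Lipschitz in `N` uniformly in `v`,
locally in `N`. The identities `1/I(N^∓) = N^±` follow by passing to the limit in
`N_{k+1} = 1/I(N_k)`, and the estimates hold as soon as the iterates lie in the Lipschitz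
neighbourhoods of `N^±`.
-/

open Set Topology

lemma abs_div_sub_div_le {x x' y y' δ X : ℝ} (hδ : 0 < δ) (hy : δ ≤ y) (hy' : δ ≤ y')
    (hx' : |x'| ≤ X) :
    |x / y - x' / y'| ≤ |x - x'| / δ + X * |y - y'| / δ ^ 2 := by
  have hy₀ := hδ.trans_le hy
  have hy₀' := hδ.trans_le hy'
  have hsplit : x / y - x' / y' = (x - x') / y + x' * (y' - y) / (y * y') := by
    field_simp; ring
  rw [hsplit]
  refine (abs_add_le _ _).trans (add_le_add ?_ ?_)
  · rw [abs_div, abs_of_pos hy₀]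
    exact div_le_div_of_nonneg_left (abs_nonneg _) hδ hy
  · rw [abs_div, abs_mul, abs_of_pos (mul_pos hy₀ hy₀'), abs_sub_comm y' y, sq]
    exact div_le_div₀ (mul_nonneg ((abs_nonneg x').trans hx') (abs_nonneg _))
      (mul_le_mul_of_nonneg_right hx' (abs_nonneg _)) (mul_pos hδ hδ)
      (mul_le_mul hy hy' hδ.le hy₀.le)

lemma tendstoUniformlyOn_of_dist_le_mul {ι α β γ : Type*} [PseudoMetricSpace β]
    [PseudoMetricSpace γ] {l : Filter ι} {F : ι → α → β} {G : α → β} {s : Set α}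
    {x : ι → γ} {a : γ} {C : ℝ} (hx : Tendsto x l (𝓝 a))
    (h : ∀ᶠ i in l, ∀ v ∈ s, dist (F i v) (G v) ≤ C * dist (x i) a) :
    TendstoUniformlyOn F G l s := by
  have hbound : Tendsto (fun i => C * dist (x i) a) l (𝓝 0) := by
    simpa using (tendsto_iff_dist_tendsto_zero.1 hx).const_mul C
  refine Metric.tendstoUniformlyOn_iff.2 fun ε hε => ?_
  filter_upwards [h, hbound.eventually (gt_mem_nhds hε)] with i hi hiε v hv
  exact dist_comm (G v) (F i v) ▸ (hi v hv).trans_lt hiε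

namespace PseudoEquilibrium

noncomputable def expHalfSqPrimitive (x : ℝ) : ℝ := ∫ u in (0 : ℝ)..x, exp (u ^ 2 / 2)

lemma continuous_exp_half_sq : Continuous fun u : ℝ => exp (u ^ 2 / 2) := by fun_prop

lemma hasDerivAt_expHalfSqPrimitive (x : ℝ) :
    HasDerivAt expHalfSqPrimitive (exp (x ^ 2 / 2)) x :=
  intervalIntegral.integral_hasDerivAt_right (continuous_exp_half_sq.intervalIntegrable 0 x)
    (continuous_exp_half_sq.stronglyMeasurableAtFilter _ _) continuous_exp_half_sq.continuousAt

lemma continuous_expHalfSqPrimitive : Continuous expHalfSqPrimitive :=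
  continuous_iff_continuousAt.2 fun x => (hasDerivAt_expHalfSqPrimitive x).continuousAt

lemma integral_exp_half_sq_sub (a c m : ℝ) :
    ∫ w in a..c, exp ((w - m) ^ 2 / 2) = expHalfSqPrimitive (c - m) - expHalfSqPrimitive (a - m) :=
  intervalIntegral.integral_eq_sub_of_hasDerivAt (f := fun w => expHalfSqPrimitive (w - m))
    (fun w _ => (hasDerivAt_expHalfSqPrimitive (w - m)).comp_sub_const w m)
    ((continuous_exp_half_sq.comp (continuous_sub_right m)).intervalIntegrable a c)

noncomputable def profile (V_R V_F m v : ℝ) : ℝ :=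
  exp (-(v - m) ^ 2 / 2) * ∫ w in (max v V_R)..V_F, exp ((w - m) ^ 2 / 2)

noncomputable def profileMass (V_R V_F m : ℝ) : ℝ :=
  ∫ v in Iic V_F, profile V_R V_F m v

noncomputable def profileDeriv (V_R V_F m v : ℝ) : ℝ :=
  (v - m) * profile V_R V_F m v +
    exp (-(v - m) ^ 2 / 2) * (exp ((max v V_R - m) ^ 2 / 2) - exp ((V_F - m) ^ 2 / 2))

lemma Ifun_eq_profileMass (b V_R V_F N : ℝ) :
    Ifun b V_R V_F N = profileMass V_R V_F (b * N) := rfl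

lemma pseudoEq_eq_profile_div (b V_R V_F N v : ℝ) :
    pseudoEq b V_R V_F N v = profile V_R V_F (b * N) v / profileMass V_R V_F (b * N) := by
  rw [pseudoEq, profile, Ifun_eq_profileMass]; ring

lemma profile_eq (V_R V_F m v : ℝ) :
    profile V_R V_F m v = exp (-(v - m) ^ 2 / 2) *
      (expHalfSqPrimitive (V_F - m) - expHalfSqPrimitive (max v V_R - m)) := by
  rw [profile, integral_exp_half_sq_sub]

lemma continuous_profile (V_R V_F m : ℝ) : Continuous (profile V_R V_F m) := by
  simp_rw [funext (profile_eq V_R V_F m)]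
  have := continuous_expHalfSqPrimitive
  fun_prop

lemma hasDerivAt_profile (V_R V_F m v : ℝ) :
    HasDerivAt (fun m => profile V_R V_F m v) (profileDeriv V_R V_F m v) m := by
  have hgauss : HasDerivAt (fun m : ℝ => exp (-(v - m) ^ 2 / 2))
      ((v - m) * exp (-(v - m) ^ 2 / 2)) m := by
    have hsq : HasDerivAt (fun m : ℝ => -(v - m) ^ 2 / 2) (v - m) m := by
      simpa using ((hasDerivAt_pow 2 (v - m)).comp_const_sub v m).neg.div_const 2
    simpa [mul_comm] using hsq.exp
  have hprim (c : ℝ) : HasDerivAt (fun m => expHalfSqPrimitive (c - m))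
      (-exp ((c - m) ^ 2 / 2)) m :=
    (hasDerivAt_expHalfSqPrimitive (c - m)).comp_const_sub c m
  simp_rw [profile_eq]
  refine (hgauss.mul ((hprim V_F).sub (hprim (max v V_R)))).congr_deriv ?_
  rw [profileDeriv, profile_eq, Pi.sub_apply]; ring

lemma exp_neg_sq_sub_le {m B : ℝ} (hm : |m| ≤ B) (v : ℝ) :
    exp (-(v - m) ^ 2 / 2) ≤ exp (B ^ 2 / 2) * exp (-v ^ 2 / 4) := by
  rw [← exp_add, exp_le_exp]
  nlinarith [sq_nonneg (v - 2 * m), sq_abs m, mul_self_le_mul_self (abs_nonneg m) hm]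

lemma exp_sq_sub_le {V_R V_F w m B : ℝ} (hw : w ∈ Icc V_R V_F) (hm : |m| ≤ B) :
    exp ((w - m) ^ 2 / 2) ≤ exp ((|V_R| + |V_F| + B) ^ 2 / 2) := by
  have hw' : |w| ≤ |V_R| + |V_F| := abs_le.2
    ⟨by linarith [neg_abs_le V_R, abs_nonneg V_F, hw.1],
     by linarith [le_abs_self V_F, abs_nonneg V_R, hw.2]⟩
  have hwm : |w - m| ≤ |V_R| + |V_F| + B := (abs_sub w m).trans (by linarith)
  rw [exp_le_exp, ← sq_abs (w - m)]
  gcongr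

noncomputable def gaussWeight (v : ℝ) : ℝ := (1 + |v|) * exp (-v ^ 2 / 4)

lemma integrable_gaussWeight : Integrable gaussWeight := by
  have hexp := integrable_exp_neg_mul_sq (b := 4⁻¹) (by norm_num)
  have hmul := (integrable_mul_exp_neg_mul_sq (b := 4⁻¹) (by norm_num)).abs
  refine (hexp.add hmul).congr (ae_of_all _ fun v => ?_)
  simp only [gaussWeight, Pi.add_apply, abs_mul, abs_of_pos (exp_pos _)]
  ring_nf

lemma gaussWeight_nonneg (v : ℝ) : 0 ≤ gaussWeight v := by
  unfold gaussWeight; positivity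

lemma gaussWeight_le_two (v : ℝ) : gaussWeight v ≤ 2 := by
  have hexp := add_one_le_exp (v ^ 2 / 4)
  calc gaussWeight v ≤ (2 * (v ^ 2 / 4 + 1)) * exp (-v ^ 2 / 4) := by
        rw [gaussWeight]
        gcongr
        nlinarith [sq_nonneg (|v| - 2), sq_abs v]
    _ ≤ 2 * exp (v ^ 2 / 4) * exp (-v ^ 2 / 4) := by gcongr
    _ = 2 := by rw [mul_assoc, ← exp_add]; ring_nf; simp

noncomputable def profileConst (V_R V_F B : ℝ) : ℝ :=
  ((V_F - V_R) * (B + 1) + 2) * exp ((|V_R| + |V_F| + B) ^ 2 / 2) * exp (B ^ 2 / 2)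

section Bounds

variable {V_R V_F m B v : ℝ}

lemma abs_integral_exp_half_sq_sub_le (hV : V_R ≤ V_F) (hm : |m| ≤ B) (hv : v ≤ V_F) :
    |∫ w in (max v V_R)..V_F, exp ((w - m) ^ 2 / 2)|
      ≤ (V_F - V_R) * exp ((|V_R| + |V_F| + B) ^ 2 / 2) := by
  have hmax : max v V_R ≤ V_F := max_le hv hV
  refine (intervalIntegral.norm_integral_le_of_norm_le_const
    (f := fun w => exp ((w - m) ^ 2 / 2)) (C := exp ((|V_R| + |V_F| + B) ^ 2 / 2))
    fun w hw => ?_).trans ?_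
  · rw [uIoc_of_le hmax] at hw
    rw [norm_of_nonneg (exp_pos _).le]
    exact exp_sq_sub_le ⟨(le_max_right v V_R).trans hw.1.le, hw.2⟩ hm
  · rw [abs_of_nonneg (sub_nonneg.2 hmax), mul_comm]
    gcongr
    exact le_max_right v V_R

lemma abs_profile_le_mul_exp (hV : V_R ≤ V_F) (hm : |m| ≤ B) (hv : v ≤ V_F) :
    |profile V_R V_F m v| ≤
      (V_F - V_R) * exp ((|V_R| + |V_F| + B) ^ 2 / 2) * (exp (B ^ 2 / 2) * exp (-v ^ 2 / 4)) := by
  rw [profile, abs_mul, abs_of_pos (exp_pos _), mul_comm]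
  exact mul_le_mul (abs_integral_exp_half_sq_sub_le hV hm hv) (exp_neg_sq_sub_le hm v)
    (exp_pos _).le (by nlinarith [exp_pos ((|V_R| + |V_F| + B) ^ 2 / 2)])

lemma abs_profile_le (hV : V_R ≤ V_F) (hm : |m| ≤ B) (hv : v ≤ V_F) :
    |profile V_R V_F m v| ≤ profileConst V_R V_F B * gaussWeight v := by
  have hB : 0 ≤ B := (abs_nonneg m).trans hm
  have hd : 0 ≤ V_F - V_R := sub_nonneg.2 hV
  refine (abs_profile_le_mul_exp hV hm hv).trans ?_
  rw [profileConst, gaussWeight]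
  have hcoef : V_F - V_R ≤ ((V_F - V_R) * (B + 1) + 2) * (1 + |v|) := by
    nlinarith [abs_nonneg v, mul_nonneg (mul_nonneg hd hB) (abs_nonneg v), mul_nonneg hd hB]
  calc (V_F - V_R) * exp ((|V_R| + |V_F| + B) ^ 2 / 2) * (exp (B ^ 2 / 2) * exp (-v ^ 2 / 4))
      ≤ ((V_F - V_R) * (B + 1) + 2) * (1 + |v|) * exp ((|V_R| + |V_F| + B) ^ 2 / 2) *
          (exp (B ^ 2 / 2) * exp (-v ^ 2 / 4)) := by gcongr
    _ = _ := by ring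

lemma abs_profileDeriv_le (hV : V_R ≤ V_F) (hm : |m| ≤ B) (hv : v ≤ V_F) :
    |profileDeriv V_R V_F m v| ≤ profileConst V_R V_F B * gaussWeight v := by
  have hB : 0 ≤ B := (abs_nonneg m).trans hm
  set E := exp ((|V_R| + |V_F| + B) ^ 2 / 2)
  set g := exp (B ^ 2 / 2) * exp (-v ^ 2 / 4)
  have hvm : |v - m| ≤ |v| + B := (abs_sub v m).trans (by linarith)
  have hgauss := exp_neg_sq_sub_le hm v
  have hjump : |exp ((max v V_R - m) ^ 2 / 2) - exp ((V_F - m) ^ 2 / 2)| ≤ 2 * E := by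
    have h₁ := exp_sq_sub_le ⟨le_max_right v V_R, max_le hv hV⟩ hm
    have h₂ := exp_sq_sub_le ⟨hV, le_rfl⟩ hm
    rw [abs_le]
    constructor <;>
      nlinarith [exp_pos ((max v V_R - m) ^ 2 / 2), exp_pos ((V_F - m) ^ 2 / 2)]
  calc |profileDeriv V_R V_F m v|
      ≤ |v - m| * |profile V_R V_F m v| + exp (-(v - m) ^ 2 / 2) *
          |exp ((max v V_R - m) ^ 2 / 2) - exp ((V_F - m) ^ 2 / 2)| := by
        rw [profileDeriv, ← abs_mul, ← abs_of_pos (exp_pos (-(v - m) ^ 2 / 2)), ← abs_mul,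
          abs_of_pos (exp_pos _)]
        exact abs_add_le _ _
    _ ≤ (|v| + B) * ((V_F - V_R) * E * g) + g * (2 * E) := by
        gcongr
        exact abs_profile_le_mul_exp hV hm hv
    _ = ((V_F - V_R) * (|v| + B) + 2) * (E * g) := by ring
    _ ≤ ((V_F - V_R) * (B + 1) + 2) * (1 + |v|) * (E * g) := by
        gcongr
        nlinarith [abs_nonneg v, mul_nonneg (mul_nonneg (sub_nonneg.2 hV) hB) (abs_nonneg v)]
    _ = profileConst V_R V_F B * gaussWeight v := by
        simp only [profileConst, gaussWeight, E, g]; ring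

lemma profile_nonneg (hV : V_R ≤ V_F) (hv : v ≤ V_F) : 0 ≤ profile V_R V_F m v :=
  mul_nonneg (exp_pos _).le
    (intervalIntegral.integral_nonneg (max_le hv hV) fun _ _ => (exp_pos _).le)

lemma abs_profile_sub_le (hV : V_R ≤ V_F) {m' : ℝ} (hm : |m| ≤ B) (hm' : |m'| ≤ B)
    (hv : v ≤ V_F) :
    |profile V_R V_F m v - profile V_R V_F m' v| ≤
      profileConst V_R V_F B * gaussWeight v * |m - m'| :=
  (convex_Icc (-B) B).norm_image_sub_le_of_norm_hasDerivWithin_le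
    (f := fun m => profile V_R V_F m v)
    (fun x _ => (hasDerivAt_profile V_R V_F x v).hasDerivWithinAt)
    (fun _ hx => abs_profileDeriv_le hV (abs_le.2 hx) hv) (abs_le.1 hm') (abs_le.1 hm)

end Bounds

variable {V_R V_F : ℝ}

lemma integrableOn_profile (hV : V_R ≤ V_F) (m : ℝ) :
    IntegrableOn (profile V_R V_F m) (Iic V_F) :=
  (integrable_gaussWeight.const_mul (profileConst V_R V_F |m|)).integrableOn.mono'
    (continuous_profile V_R V_F m).aestronglyMeasurable
    ((ae_restrict_iff' measurableSet_Iic).2 (ae_of_all _ fun _ hv => abs_profile_le hV le_rfl hv))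

lemma abs_profileMass_sub_le (hV : V_R ≤ V_F) {B m m' : ℝ} (hm : |m| ≤ B) (hm' : |m'| ≤ B) :
    |profileMass V_R V_F m - profileMass V_R V_F m'| ≤
      profileConst V_R V_F B * (∫ v in Iic V_F, gaussWeight v) * |m - m'| := by
  rw [profileMass, profileMass,
    ← integral_sub (integrableOn_profile hV m) (integrableOn_profile hV m'),
    ← integral_const_mul, ← integral_mul_const]
  exact norm_integral_le_of_norm_le (f := fun v => profile V_R V_F m v - profile V_R V_F m' v)
    ((integrable_gaussWeight.integrableOn.const_mul _).mul_const _)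
    ((ae_restrict_iff' measurableSet_Iic).2
      (ae_of_all _ fun _ hv => abs_profile_sub_le hV hm hm' hv))

lemma profileMass_pos (hV : V_R < V_F) (m : ℝ) : 0 < profileMass V_R V_F m := by
  have hpos : 0 < ∫ v in V_R..V_F, profile V_R V_F m v := by
    refine intervalIntegral.intervalIntegral_pos_of_pos_on
      ((continuous_profile V_R V_F m).intervalIntegrable _ _) (fun v hv => ?_) hV
    rw [profile, max_eq_left hv.1.le]
    exact mul_pos (exp_pos _) (intervalIntegral.intervalIntegral_pos_of_pos
      ((continuous_exp_half_sq.comp (continuous_sub_right m)).intervalIntegrable _ _)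
      (fun _ => exp_pos _) hv.2)
  rw [intervalIntegral.integral_of_le hV.le] at hpos
  exact hpos.trans_le (setIntegral_mono_set (integrableOn_profile hV.le m)
    ((ae_restrict_iff' measurableSet_Iic).2 (ae_of_all _ fun _ hv => profile_nonneg hV.le hv))
    Ioc_subset_Iic_self.eventuallyLE)

lemma continuous_profileMass (hV : V_R ≤ V_F) : Continuous (profileMass V_R V_F) := by
  refine continuous_iff_continuousAt.2 fun a => ?_
  have hlip : LipschitzOnWith _ (profileMass V_R V_F) (Icc (-(|a| + 1)) (|a| + 1)) :=
    LipschitzOnWith.of_dist_le' fun _ hx _ hy =>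
      abs_profileMass_sub_le hV (abs_le.2 hx) (abs_le.2 hy)
  exact hlip.continuousOn.continuousAt
    (Icc_mem_nhds (by linarith [neg_abs_le a]) (by linarith [le_abs_self a]))

theorem exists_abs_profile_div_sub_le (hV : V_R < V_F) {B : ℝ} (hB : 0 ≤ B) :
    ∃ C, 0 ≤ C ∧ ∀ m m', |m| ≤ B → |m'| ≤ B → ∀ v ≤ V_F,
      |profile V_R V_F m v / profileMass V_R V_F m - profile V_R V_F m' v / profileMass V_R V_F m'|
        ≤ C * |m - m'| := by
  obtain ⟨δ, hδ, hδle⟩ := isCompact_Icc.exists_forall_le' (s := Icc (-B) B)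
    (continuous_profileMass hV.le).continuousOn fun m _ => profileMass_pos hV m
  set K := profileConst V_R V_F B
  set L := ∫ v in Iic V_F, gaussWeight v
  have hK : 0 ≤ K := by unfold K profileConst; have := sub_nonneg.2 hV.le; positivity
  have hL : 0 ≤ L := setIntegral_nonneg measurableSet_Iic fun v _ => gaussWeight_nonneg v
  refine ⟨2 * K / δ + 2 * K * (K * L) / δ ^ 2, by positivity, fun m m' hm hm' v hv => ?_⟩
  have hx' : |profile V_R V_F m' v| ≤ 2 * K := (abs_profile_le hV.le hm' hv).trans (by
    nlinarith [gaussWeight_le_two v])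
  refine (abs_div_sub_div_le hδ (hδle m (abs_le.1 hm)) (hδle m' (abs_le.1 hm')) hx').trans ?_
  have hnum : |profile V_R V_F m v - profile V_R V_F m' v| ≤ 2 * K * |m - m'| :=
    (abs_profile_sub_le hV.le hm hm' hv).trans (mul_le_mul_of_nonneg_right
      (by nlinarith [gaussWeight_le_two v]) (abs_nonneg _))
  have hden := abs_profileMass_sub_le hV.le hm hm'
  calc _ ≤ 2 * K * |m - m'| / δ + 2 * K * (K * L * |m - m'|) / δ ^ 2 := by gcongr
    _ = _ := by ring

theorem exists_pseudoEq_lipschitzOn_nhds (b : ℝ) (hV : V_R < V_F) (a : ℝ) :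
    ∃ C, 0 < C ∧ ∃ U ∈ 𝓝 a, ∀ N ∈ U, ∀ N' ∈ U, ∀ v ≤ V_F,
      |pseudoEq b V_R V_F N v - pseudoEq b V_R V_F N' v| ≤ C * |N - N'| := by
  obtain ⟨C, hC, hlip⟩ := exists_abs_profile_div_sub_le hV (B := |b| * (|a| + 1)) (by positivity)
  have hbN : ∀ N ∈ Icc (a - 1) (a + 1), |b * N| ≤ |b| * (|a| + 1) := fun N hN => by
    rw [abs_mul]
    gcongr
    exact abs_le.2 ⟨by linarith [neg_abs_le a, hN.1], by linarith [le_abs_self a, hN.2]⟩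
  refine ⟨|b| * C + 1, by positivity, Icc (a - 1) (a + 1), Icc_mem_nhds (by linarith) (by linarith),
    fun N hN N' hN' v hv => ?_⟩
  simp only [pseudoEq_eq_profile_div]
  calc _ ≤ C * |b * N - b * N'| := hlip _ _ (hbN N hN) (hbN N' hN') v hv
    _ = |b| * C * |N - N'| := by rw [← mul_sub, abs_mul]; ring
    _ ≤ (|b| * C + 1) * |N - N'| := by gcongr; linarith

lemma one_div_Ifun_eq_of_tendsto {b : ℝ} (hV : V_R < V_F) {ι : Type*} {l : Filter ι} [l.NeBot]
    {x y : ι → ℝ} {a c : ℝ} (hx : Tendsto x l (𝓝 a)) (hy : Tendsto y l (𝓝 c))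
    (hxy : ∀ i, y i = 1 / Ifun b V_R V_F (x i)) :
    1 / Ifun b V_R V_F a = c := by
  have hI : Continuous (Ifun b V_R V_F) :=
    (continuous_profileMass hV.le).comp (continuous_const_mul b)
  refine tendsto_nhds_unique ?_ hy
  exact (tendsto_const_nhds.div (hI.tendsto a |>.comp hx) (profileMass_pos hV (b * a)).ne').congr
    fun i => (hxy i).symm

end PseudoEquilibrium

theorem pseudoEq_two_cycle_general (b V_R V_F : ℝ) (hV : V_R < V_F)
    (Nseq : ℕ → ℝ)
    (hrec : ∀ k : ℕ, Nseq (k + 1) = 1 / Ifun b V_R V_F (Nseq k))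
    (Nminus Nplus : ℝ)
    (hodd : Tendsto (fun k => Nseq (2 * k + 1)) atTop (nhds Nminus))
    (heven : Tendsto (fun k => Nseq (2 * k)) atTop (nhds Nplus)) :
    1 / Ifun b V_R V_F Nminus = Nplus ∧
    1 / Ifun b V_R V_F Nplus = Nminus ∧
    (∃ Cm : ℝ, 0 < Cm ∧ ∃ Cp : ℝ, 0 < Cp ∧ ∃ k₀ : ℕ, ∀ k : ℕ, k₀ ≤ k →
      (∀ v : ℝ, v ≤ V_F →
        |pseudoEq b V_R V_F (Nseq (2 * k + 3)) v - pseudoEq b V_R V_F (Nseq (2 * k + 1)) v|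
          ≤ Cm * |Nseq (2 * k + 3) - Nseq (2 * k + 1)|) ∧
      (∀ v : ℝ, v ≤ V_F →
        |pseudoEq b V_R V_F (Nseq (2 * k + 2)) v - pseudoEq b V_R V_F (Nseq (2 * k)) v|
          ≤ Cp * |Nseq (2 * k + 2) - Nseq (2 * k)|) ∧
      (∀ v : ℝ, v ≤ V_F →
        |pseudoEq b V_R V_F (Nseq (2 * k + 1)) v - pseudoEq b V_R V_F Nminus v|
          ≤ Cm * |Nseq (2 * k + 1) - Nminus|) ∧
      (∀ v : ℝ, v ≤ V_F →
        |pseudoEq b V_R V_F (Nseq (2 * k)) v - pseudoEq b V_R V_F Nplus v|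
          ≤ Cp * |Nseq (2 * k) - Nplus|)) ∧
    TendstoUniformlyOn (fun k => pseudoEq b V_R V_F (Nseq (2 * k + 1)))
      (pseudoEq b V_R V_F Nminus) atTop (Set.Iic V_F) ∧
    TendstoUniformlyOn (fun k => pseudoEq b V_R V_F (Nseq (2 * k)))
      (pseudoEq b V_R V_F Nplus) atTop (Set.Iic V_F) := by
  have hodd' : Tendsto (fun k => Nseq (2 * k + 3)) atTop (𝓝 Nminus) :=
    hodd.comp (tendsto_add_atTop_nat 1)
  have heven' : Tendsto (fun k => Nseq (2 * k + 2)) atTop (𝓝 Nplus) :=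
    heven.comp (tendsto_add_atTop_nat 1)
  obtain ⟨Cm, hCm, Um, hUm, hlipm⟩ :=
    PseudoEquilibrium.exists_pseudoEq_lipschitzOn_nhds b hV Nminus
  obtain ⟨Cp, hCp, Up, hUp, hlipp⟩ :=
    PseudoEquilibrium.exists_pseudoEq_lipschitzOn_nhds b hV Nplus
  have hoddU : ∀ᶠ k in atTop, Nseq (2 * k + 1) ∈ Um := hodd.eventually_mem hUm
  have hevenU : ∀ᶠ k in atTop, Nseq (2 * k) ∈ Up := heven.eventually_mem hUp
  refine ⟨PseudoEquilibrium.one_div_Ifun_eq_of_tendsto hV hodd heven' fun k => hrec (2 * k + 1),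
    PseudoEquilibrium.one_div_Ifun_eq_of_tendsto hV heven hodd fun k => hrec (2 * k),
    ⟨Cm, hCm, Cp, hCp, eventually_atTop.1 ?_⟩,
    tendstoUniformlyOn_of_dist_le_mul hodd
      (hoddU.mono fun _ hk v hv => hlipm _ hk _ (mem_of_mem_nhds hUm) v hv),
    tendstoUniformlyOn_of_dist_le_mul heven
      (hevenU.mono fun _ hk v hv => hlipp _ hk _ (mem_of_mem_nhds hUp) v hv)⟩
  filter_upwards [hoddU, hodd'.eventually_mem hUm, hevenU, heven'.eventually_mem hUp]
    with k h₁ h₃ h₀ h₂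
  exact ⟨hlipm _ h₃ _ h₁, hlipp _ h₂ _ h₀, hlipm _ h₁ _ (mem_of_mem_nhds hUm),
    hlipp _ h₀ _ (mem_of_mem_nhds hUp)⟩

/-- Theorem 2.11: for a firing rate sequence whose odd subsequence converges to `N⁻ > 0`
and whose even subsequence converges to `N⁺ > 0` (so that `1/I(N⁻) = N⁺` and
`1/I(N⁺) = N⁻`), the associated pseudo-equilibria `p_{k,∞} = h(·, N_{k−1,∞})` satisfy the
eventual sup-norm estimates of the statement, and the even- (resp. odd-) indexed
pseudo-equilibria converge uniformly on `(−∞, V_F]` to `h(·,N⁻)` (resp. `h(·,N⁺)`). -/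
theorem pseudoEq_two_cycle (b V_R V_F : ℝ) (hV : V_R < V_F)
    (Nseq : ℕ → ℝ) (h0 : 0 ≤ Nseq 0)
    (hrec : ∀ k : ℕ, Nseq (k + 1) = 1 / Ifun b V_R V_F (Nseq k))
    (Nminus Nplus : ℝ) (hm : 0 < Nminus) (hp : 0 < Nplus)
    (hodd : Tendsto (fun k => Nseq (2 * k + 1)) atTop (nhds Nminus))
    (heven : Tendsto (fun k => Nseq (2 * k)) atTop (nhds Nplus)) :
    1 / Ifun b V_R V_F Nminus = Nplus ∧
    1 / Ifun b V_R V_F Nplus = Nminus ∧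
    (∃ Cm : ℝ, 0 < Cm ∧ ∃ Cp : ℝ, 0 < Cp ∧ ∃ k₀ : ℕ, ∀ k : ℕ, k₀ ≤ k →
      (∀ v : ℝ, v ≤ V_F →
        |pseudoEq b V_R V_F (Nseq (2 * k + 3)) v - pseudoEq b V_R V_F (Nseq (2 * k + 1)) v|
          ≤ Cm * |Nseq (2 * k + 3) - Nseq (2 * k + 1)|) ∧
      (∀ v : ℝ, v ≤ V_F →
        |pseudoEq b V_R V_F (Nseq (2 * k + 2)) v - pseudoEq b V_R V_F (Nseq (2 * k)) v|
          ≤ Cp * |Nseq (2 * k + 2) - Nseq (2 * k)|) ∧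
      (∀ v : ℝ, v ≤ V_F →
        |pseudoEq b V_R V_F (Nseq (2 * k + 1)) v - pseudoEq b V_R V_F Nminus v|
          ≤ Cm * |Nseq (2 * k + 1) - Nminus|) ∧
      (∀ v : ℝ, v ≤ V_F →
        |pseudoEq b V_R V_F (Nseq (2 * k)) v - pseudoEq b V_R V_F Nplus v|
          ≤ Cp * |Nseq (2 * k) - Nplus|)) ∧
    TendstoUniformlyOn (fun k => pseudoEq b V_R V_F (Nseq (2 * k + 1)))
      (pseudoEq b V_R V_F Nminus) atTop (Set.Iic V_F) ∧
    TendstoUniformlyOn (fun k => pseudoEq b V_R V_F (Nseq (2 * k)))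
      (pseudoEq b V_R V_F Nplus) atTop (Set.Iic V_F) :=
  pseudoEq_two_cycle_general b V_R V_F hV Nseq hrec Nminus Nplus hodd heven
end
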